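/- arXiv:0706.2581 — 5 statements merged into one kernel-verified Lean document; each statement's English description precedes it below -/
import Mathlib

section
/- Let s be a finite-dimensional real Lie algebra, s' ⊆ s a Lie subalgebra, and m a linear complement of s' with ⁅s', m⁆ ⊆ m, and let g be the associated contraction, i.e., the Lie algebra on the vector space s with bracket ⁅a+u, b+v⁆_g := ⁅a,b⁆ + ⁅a,v⁆ + ⁅u,b⁆ for a,b ∈ s', u,v ∈ m. Then N(g) ≥ N(s). -/
attribute [local instance 100] LieRing.ofAssociativeRing

/-- The number of functionally independent invariants of the coadjoint representation of a
finite-dimensional Lie algebra `L` over `K`: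
`N(L) := dim L − max_{ξ ∈ L*} rank (x ↦ (y ↦ ξ⁅x,y⁆))`. -/
noncomputable def lieInvariantsNumber (K : Type*) (L : Type*) [Field K] [LieRing L]
    [LieAlgebra K L] : ℕ :=
  Module.finrank K L -
    sSup (Set.range fun ξ : Module.Dual K L =>
      Module.finrank K (LinearMap.range
        ((LinearMap.llcomp K L L K ξ).comp (LieAlgebra.ad K L).toLinearMap)))

open Module LinearMap Polynomial in
lemma aux_semicont {V W : Type*} [AddCommGroup V] [Module ℝ V] [AddCommGroup W] [Module ℝ W]
    [FiniteDimensional ℝ V] [FiniteDimensional ℝ W]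
    (f₀ f₁ f₂ : V →ₗ[ℝ] W) (r : ℕ)
    (h : ∀ t : ℝ, t ≠ 0 → finrank ℝ (range (f₀ + t • f₁ + (t * t) • f₂)) ≤ r) :
    finrank ℝ (range f₀) ≤ r := by
  classical
  set k := finrank ℝ (LinearMap.range f₀) with hk
  let b : Basis (Fin k) ℝ (LinearMap.range f₀) := Module.finBasis ℝ (LinearMap.range f₀)
  choose v hv using fun i => LinearMap.mem_range.mp (b i).2
  have hw : LinearIndependent ℝ (fun i => f₀ (v i)) := by
    have h2 := b.linearIndependent.map' (LinearMap.range f₀).subtype (Submodule.ker_subtype _)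
    have hfe : (fun i => f₀ (v i)) = ⇑(LinearMap.range f₀).subtype ∘ ⇑b := by
      funext i; rw [hv]; rfl
    rw [hfe]; exact h2
  let bs : Basis (Fin k) ℝ (Submodule.span ℝ (Set.range fun i => f₀ (v i))) := Basis.span hw
  obtain ⟨U', hU'⟩ := Submodule.exists_isCompl (Submodule.span ℝ (Set.range fun i => f₀ (v i)))
  let p : W →ₗ[ℝ] (Fin k → ℝ) :=
    bs.equivFun.toLinearMap ∘ₗ (Submodule.projectionOnto _ _ hU')
  have hp : ∀ i j, p (f₀ (v i)) j = if i = j then 1 else 0 := by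
    intro i j
    have h1 : (Submodule.projectionOnto _ _ hU') (f₀ (v i)) = bs i := by
      have h3 : f₀ (v i) = ↑(bs i) := congrArg Subtype.val (Basis.span_apply hw i).symm
      rw [h3, Submodule.projectionOnto_apply_left]
    simp only [p, LinearMap.comp_apply, h1, LinearEquiv.coe_coe]
    rw [Basis.equivFun_self]
  let L : (Fin k → ℝ) →ₗ[ℝ] V := Fintype.linearCombination ℝ v
  let D : ℝ → (V →ₗ[ℝ] W) := fun t => f₀ + t • f₁ + (t * t) • f₂
  let q : ℝ → ((Fin k → ℝ) →ₗ[ℝ] (Fin k → ℝ)) := fun t => p ∘ₗ (D t ∘ₗ L)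
  have hL : ∀ j, L (fun j' => if j' = j then (1:ℝ) else 0) = v j := by
    intro j
    have hs : (fun j' => if j' = j then (1:ℝ) else 0) = Pi.single j 1 := by
      funext j'; simp [Pi.single_apply]
    rw [hs, Fintype.linearCombination_apply_single, one_smul]
  let Pm : Matrix (Fin k) (Fin k) ℝ[X] := Matrix.of fun i j =>
    C (p (f₀ (v j)) i) + C (p (f₁ (v j)) i) * X + C (p (f₂ (v j)) i) * (X * X)
  have heval : ∀ t : ℝ, Pm.map (eval t) = LinearMap.toMatrix' (q t) := by
    intro t
    ext i j
    rw [LinearMap.toMatrix'_apply]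
    simp only [Matrix.map_apply, Matrix.of_apply, Pm, eval_add, eval_mul, eval_C, eval_X]
    simp only [q, D, L, LinearMap.comp_apply, hL j, LinearMap.add_apply, LinearMap.smul_apply,
      map_add, map_smul, Pi.add_apply, Pi.smul_apply, smul_eq_mul,
      Fintype.linearCombination_apply_single, one_smul]
    ring
  have hmat0 : Pm.map (eval 0) = 1 := by
    rw [heval 0]
    ext i j
    rw [LinearMap.toMatrix'_apply, Matrix.one_apply]
    simp only [q, D, LinearMap.comp_apply, hL j, LinearMap.add_apply, LinearMap.smul_apply,
      zero_smul, mul_zero, zero_mul, add_zero, L, Fintype.linearCombination_apply_single, one_smul]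
    rw [hp j i]
    simp [eq_comm]
  have h0 : Pm.det.eval 0 = 1 := by
    have hdet := RingHom.map_det (evalRingHom (0:ℝ)) Pm
    rw [RingHom.mapMatrix_apply] at hdet
    simp only [coe_evalRingHom] at hdet
    rw [hdet, hmat0, Matrix.det_one]
  have hPm : Pm.det ≠ 0 := by
    intro hc
    rw [hc, eval_zero] at h0
    norm_num at h0
  have hXne : Pm.det * X ≠ 0 := mul_ne_zero hPm X_ne_zero
  obtain ⟨t, ht⟩ := (Polynomial.finite_setOf_isRoot hXne).infinite_compl.nonempty
  simp only [Set.mem_compl_iff, Set.mem_setOf_eq, IsRoot, eval_mul, eval_X, mul_eq_zero,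
    not_or] at ht
  obtain ⟨hdt, ht0⟩ := ht
  have hdetq : LinearMap.det (q t) ≠ 0 := by
    rw [← LinearMap.det_toMatrix', ← heval t]
    have hdet := RingHom.map_det (evalRingHom t) Pm
    rw [RingHom.mapMatrix_apply] at hdet
    simp only [coe_evalRingHom] at hdet
    rw [← hdet]
    exact hdt
  have hsurj : LinearMap.range (q t) = ⊤ := by
    have hc : (LinearMap.equivOfDetNeZero (q t) hdetq : (Fin k → ℝ) →ₗ[ℝ] (Fin k → ℝ)) = q t :=
      LinearEquiv.coe_ofIsUnitDet _
    rw [← hc]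
    exact LinearEquiv.range _
  have h1 : finrank ℝ (LinearMap.range (q t)) = k := by
    rw [hsurj, finrank_top, Module.finrank_fin_fun]
  have hrank : k ≤ finrank ℝ (LinearMap.range (D t)) := by
    calc k = finrank ℝ (LinearMap.range (q t)) := h1.symm
      _ = finrank ℝ (Submodule.map p (LinearMap.range (D t ∘ₗ L))) := by
          rw [← LinearMap.range_comp]
      _ ≤ finrank ℝ (LinearMap.range (D t ∘ₗ L)) := Submodule.finrank_map_le p _
      _ ≤ finrank ℝ (LinearMap.range (D t)) :=
          Submodule.finrank_mono (LinearMap.range_comp_le_range _ _)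
  exact le_trans hrank (h t ht0)

open Module LinearMap in
lemma rank_conj {V V' W W' : Type*} [AddCommGroup V] [Module ℝ V] [AddCommGroup V'] [Module ℝ V']
    [AddCommGroup W] [Module ℝ W] [AddCommGroup W'] [Module ℝ W']
    (f : V →ₗ[ℝ] W) (e₁ : V' ≃ₗ[ℝ] V) (e₂ : W ≃ₗ[ℝ] W') :
    finrank ℝ (range (e₂.toLinearMap ∘ₗ f ∘ₗ e₁.toLinearMap)) = finrank ℝ (range f) := by
  rw [LinearMap.range_comp, LinearMap.range_comp, LinearEquiv.range, Submodule.map_top,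
    LinearEquiv.finrank_map_eq]

/- STATEMENT 2: If `g` is the contraction of `s` associated to the reduction `s' ⊕ m = s`
(i.e. `g` is a Lie algebra whose underlying vector space is identified with `s` via a linear
equivalence `e`, with bracket `⁅a+u, b+v⁆_g = ⁅a,b⁆ + ⁅a,v⁆ + ⁅u,b⁆`), then `N(g) ≥ N(s)`. -/
theorem contraction_invariants_ge
    (s : Type*) [LieRing s] [LieAlgebra ℝ s] [FiniteDimensional ℝ s]
    (s' : LieSubalgebra ℝ s) (m : Submodule ℝ s)
    (hcompl : IsCompl s'.toSubmodule m)
    (hbr : ∀ a ∈ s', ∀ u ∈ m, ⁅a, u⁆ ∈ m)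
    (g : Type*) [LieRing g] [LieAlgebra ℝ g]
    (e : g ≃ₗ[ℝ] s)
    (hg : ∀ (x y : g) (a b u v : s), a ∈ s' → b ∈ s' → u ∈ m → v ∈ m →
      e x = a + u → e y = b + v → e ⁅x, y⁆ = ⁅a, b⁆ + ⁅a, v⁆ + ⁅u, b⁆) :
    lieInvariantsNumber ℝ s ≤ lieInvariantsNumber ℝ g := by
  classical
  have hfin : Module.finrank ℝ g = Module.finrank ℝ s := LinearEquiv.finrank_eq e
  unfold lieInvariantsNumber
  rw [hfin]
  apply Nat.sub_le_sub_left
  have hbdd : BddAbove (Set.range fun ξ : Module.Dual ℝ s =>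
      Module.finrank ℝ (LinearMap.range
        ((LinearMap.llcomp ℝ s s ℝ ξ).comp (LieAlgebra.ad ℝ s).toLinearMap))) := by
    refine ⟨Module.finrank ℝ s, ?_⟩
    rintro n ⟨ξ, rfl⟩
    exact LinearMap.finrank_range_le _
  apply csSup_le (Set.range_nonempty _)
  rintro n ⟨ξ, rfl⟩
  -- projections
  set π : s →ₗ[ℝ] s :=
    s'.toSubmodule.subtype ∘ₗ s'.toSubmodule.projectionOnto m hcompl with hπdef
  set κ : s →ₗ[ℝ] s :=
    m.subtype ∘ₗ m.projectionOnto s'.toSubmodule hcompl.symm with hκdef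
  have hπmem : ∀ x : s, π x ∈ s'.toSubmodule := fun x =>
    (s'.toSubmodule.projectionOnto m hcompl x).2
  have hκmem : ∀ x : s, κ x ∈ m := fun x =>
    (m.projectionOnto s'.toSubmodule hcompl.symm x).2
  have hπ1 : ∀ x ∈ s'.toSubmodule, π x = x := by
    intro x hx
    show s'.toSubmodule.subtype (s'.toSubmodule.projectionOnto m hcompl x) = x
    rw [show x = ((⟨x, hx⟩ : s'.toSubmodule) : s) from rfl,
      Submodule.projectionOnto_apply_left]
    rfl
  have hπ0 : ∀ x ∈ m, π x = 0 := by
    intro x hx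
    show s'.toSubmodule.subtype (s'.toSubmodule.projectionOnto m hcompl x) = 0
    rw [Submodule.projectionOnto_apply_of_mem_right hcompl hx, map_zero]
  have hκ1 : ∀ x ∈ m, κ x = x := by
    intro x hx
    show m.subtype (m.projectionOnto s'.toSubmodule hcompl.symm x) = x
    rw [show x = ((⟨x, hx⟩ : m) : s) from rfl, Submodule.projectionOnto_apply_left]
    rfl
  have hκ0 : ∀ x ∈ s'.toSubmodule, κ x = 0 := by
    intro x hx
    show m.subtype (m.projectionOnto s'.toSubmodule hcompl.symm x) = 0
    rw [Submodule.projectionOnto_apply_of_mem_right hcompl.symm hx, map_zero]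
  have haddπκ : ∀ x : s, π x + κ x = x := fun x =>
    Submodule.projection_add_projection_eq_self hcompl x
  -- bracket membership
  have hmem1 : ∀ x y : s, ⁅π x, π y⁆ ∈ s'.toSubmodule := fun x y =>
    s'.lie_mem (hπmem x) (hπmem y)
  have hmem2 : ∀ x y : s, ⁅π x, κ y⁆ ∈ m := fun x y => hbr _ (hπmem x) _ (hκmem y)
  have hmem3 : ∀ x y : s, ⁅κ x, π y⁆ ∈ m := by
    intro x y
    rw [← lie_skew]
    exact neg_mem (hbr _ (hπmem y) _ (hκmem x))
  set η : Module.Dual ℝ s := ξ.comp e.symm.toLinearMap with hηdef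
  set B₀ : s →ₗ[ℝ] Module.Dual ℝ s := LinearMap.mk₂ ℝ
    (fun x y => η ⁅π x, π y⁆ + η ⁅π x, κ y⁆ + η ⁅κ x, π y⁆)
    (by intro x x' y; simp only [map_add, add_lie, lie_add]; ring)
    (by intro c x y; simp only [map_smul, smul_lie, lie_smul, smul_eq_mul]; ring)
    (by intro x y y'; simp only [map_add, add_lie, lie_add]; ring)
    (by intro c x y; simp only [map_smul, smul_lie, lie_smul, smul_eq_mul]; ring) with hB₀def
  set C₁ : s →ₗ[ℝ] Module.Dual ℝ s := LinearMap.mk₂ ℝ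
    (fun x y => η (κ ⁅κ x, κ y⁆))
    (by intro x x' y; simp only [map_add, add_lie, lie_add])
    (by intro c x y; simp only [map_smul, smul_lie, lie_smul, smul_eq_mul])
    (by intro x y y'; simp only [map_add, add_lie, lie_add])
    (by intro c x y; simp only [map_smul, smul_lie, lie_smul, smul_eq_mul]) with hC₁def
  set C₂ : s →ₗ[ℝ] Module.Dual ℝ s := LinearMap.mk₂ ℝ
    (fun x y => η (π ⁅κ x, κ y⁆))
    (by intro x x' y; simp only [map_add, add_lie, lie_add])
    (by intro c x y; simp only [map_smul, smul_lie, lie_smul, smul_eq_mul])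
    (by intro x y y'; simp only [map_add, add_lie, lie_add])
    (by intro c x y; simp only [map_smul, smul_lie, lie_smul, smul_eq_mul]) with hC₂def
  -- step 1 : the g-rank of ξ equals the rank of B₀
  have hG : (LinearMap.llcomp ℝ g g ℝ ξ).comp (LieAlgebra.ad ℝ g).toLinearMap
      = e.dualMap.toLinearMap ∘ₗ B₀ ∘ₗ e.toLinearMap := by
    apply LinearMap.ext; intro x
    apply LinearMap.ext; intro y
    have hxy := hg x y (π (e x)) (π (e y)) (κ (e x)) (κ (e y))
      (hπmem (e x)) (hπmem (e y)) (hκmem (e x)) (hκmem (e y))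
      (haddπκ (e x)).symm (haddπκ (e y)).symm
    show ξ ⁅x, y⁆ = B₀ (e x) (e y)
    have h1 : ξ ⁅x, y⁆ = η (e ⁅x, y⁆) := by
      rw [hηdef]; simp
    rw [h1, hxy, hB₀def]
    simp only [LinearMap.mk₂_apply, map_add]
  have hrank0 : Module.finrank ℝ (LinearMap.range
      ((LinearMap.llcomp ℝ g g ℝ ξ).comp (LieAlgebra.ad ℝ g).toLinearMap))
      = Module.finrank ℝ (LinearMap.range B₀) := by
    rw [hG]; exact rank_conj B₀ e e.dualMap
  beta_reduce
  rw [hrank0]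
  -- step 2 : semicontinuity
  apply aux_semicont B₀ C₁ C₂
  intro t ht
  set η_t : Module.Dual ℝ s := t • (η ∘ₗ π) + η ∘ₗ κ with hηt
  -- algebraic identities for projections
  have hππ : π ∘ₗ π = π := by ext x; exact hπ1 _ (hπmem x)
  have hπκ : π ∘ₗ κ = 0 := by ext x; exact hπ0 _ (hκmem x)
  have hκπ : κ ∘ₗ π = 0 := by ext x; exact hκ0 _ (hπmem x)
  have hκκ : κ ∘ₗ κ = κ := by ext x; exact hκ1 _ (hκmem x)
  have hsum : π + κ = LinearMap.id := by ext x; exact haddπκ x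
  have h1 : (π + t • κ) ∘ₗ (π + t⁻¹ • κ) = LinearMap.id := by
    simp only [LinearMap.add_comp, LinearMap.comp_add, LinearMap.smul_comp, LinearMap.comp_smul,
      hππ, hπκ, hκπ, hκκ, smul_zero, add_zero, zero_add, smul_smul]
    rw [inv_mul_cancel₀ ht, one_smul, hsum]
  have h2 : (π + t⁻¹ • κ) ∘ₗ (π + t • κ) = LinearMap.id := by
    simp only [LinearMap.add_comp, LinearMap.comp_add, LinearMap.smul_comp, LinearMap.comp_smul,
      hππ, hπκ, hκπ, hκκ, smul_zero, add_zero, zero_add, smul_smul]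
    rw [mul_inv_cancel₀ ht, one_smul, hsum]
  set φ : s ≃ₗ[ℝ] s := LinearEquiv.ofLinear (π + t • κ) (π + t⁻¹ • κ) h1 h2 with hφdef
  have hHt : t • (B₀ + t • C₁ + (t * t) • C₂)
      = φ.dualMap.toLinearMap ∘ₗ
        ((LinearMap.llcomp ℝ s s ℝ η_t).comp (LieAlgebra.ad ℝ s).toLinearMap) ∘ₗ
        φ.toLinearMap := by
    apply LinearMap.ext; intro x
    apply LinearMap.ext; intro y
    show t * ((B₀ + t • C₁ + (t * t) • C₂) x y) = η_t ⁅φ x, φ y⁆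
    have hφx : φ x = π x + t • κ x := rfl
    have hφy : φ y = π y + t • κ y := rfl
    have expand : ⁅(π x + t • κ x : s), (π y + t • κ y : s)⁆
        = ⁅π x, π y⁆ + t • ⁅π x, κ y⁆ + t • ⁅κ x, π y⁆ + (t * t) • ⁅κ x, κ y⁆ := by
      simp only [add_lie, lie_add, smul_lie, lie_smul, smul_smul]
      module
    rw [hφx, hφy, expand, hηt]
    have eπ1 : π ⁅π x, π y⁆ = ⁅π x, π y⁆ := hπ1 _ (hmem1 x y)
    have eπ2 : π ⁅π x, κ y⁆ = 0 := hπ0 _ (hmem2 x y)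
    have eπ3 : π ⁅κ x, π y⁆ = 0 := hπ0 _ (hmem3 x y)
    have eκ1 : κ ⁅π x, π y⁆ = 0 := hκ0 _ (hmem1 x y)
    have eκ2 : κ ⁅π x, κ y⁆ = ⁅π x, κ y⁆ := hκ1 _ (hmem2 x y)
    have eκ3 : κ ⁅κ x, π y⁆ = ⁅κ x, π y⁆ := hκ1 _ (hmem3 x y)
    simp only [LinearMap.add_apply, LinearMap.smul_apply, LinearMap.comp_apply,
      map_add, map_smul, eπ1, eπ2, eπ3, eκ1, eκ2, eκ3, smul_zero, add_zero, zero_add,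
      smul_eq_mul, hB₀def, hC₁def, hC₂def, LinearMap.mk₂_apply, map_zero]
    ring
  have hrt : Module.finrank ℝ (LinearMap.range (B₀ + t • C₁ + (t * t) • C₂))
      = Module.finrank ℝ (LinearMap.range
        ((LinearMap.llcomp ℝ s s ℝ η_t).comp (LieAlgebra.ad ℝ s).toLinearMap)) := by
    rw [← LinearMap.range_smul _ t ht, hHt]
    exact rank_conj _ φ φ.dualMap
  rw [hrt]
  exact le_csSup hbdd ⟨η_t, rfl⟩
end

section
/- Let s be an n-dimensional real Lie algebra with basis (X_1,…,X_n) and structure constants ⁅X_i,X_j⁆ = Σ_k C_{ij}^k X_k, such that s' := span(X_1,…,X_s) is a Lie subalgebra and m := span(X_{s+1},…,X_n) satisfies ⁅s', m⁆ ⊆ m (so C_{ij}^k = 0 whenever i ≤ s, j ≤ s, k > s, and whenever i ≤ s < j and k ≤ s). Let g be the contracted Lie algebra with structure constants Ĉ_{ij}^k = C_{ij}^k if i ≤ s or j ≤ s, and Ĉ_{ij}^k = 0 if both i > s and j > s. Let F ∈ ℝ[x_1,…,x_n] be an invariant of s, write F = Σ_d F_d where F_d is the homogeneous component of total degree d in the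 variables x_{s+1},…,x_n, and let M be the largest d with F_M ≠ 0. Then F_M is an invariant of g. -/
open MvPolynomial

/-- A polynomial `F ∈ ℝ[x_1,…,x_n]` is an invariant of the Lie algebra with structure
constants `C` if for every `i` one has `Σ_{j,k} C_{ij}^k x_k ∂F/∂x_j = 0`. -/
def IsLieInvariant {n : ℕ} (C : Fin n → Fin n → Fin n → ℝ)
    (F : MvPolynomial (Fin n) ℝ) : Prop :=
  ∀ i : Fin n, ∑ j : Fin n, ∑ k : Fin n,
    MvPolynomial.C (C i j k) * X k * pderiv j F = 0

/-- The homogeneous component of `F` of total degree `d` in the variables `x_{s+1},…,x_n`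
(i.e. the variables with index `≥ sN`). -/
noncomputable def highVarComponent (n sN : ℕ) (F : MvPolynomial (Fin n) ℝ) (d : ℕ) :
    MvPolynomial (Fin n) ℝ :=
  ∑ mexp ∈ F.support.filter
      (fun mexp => (∑ i : Fin n, if sN ≤ (i : ℕ) then mexp i else 0) = d),
    monomial mexp (F.coeff mexp)

noncomputable def wdeg (n sN : ℕ) (m : Fin n →₀ ℕ) : ℕ :=
  ∑ i : Fin n, if sN ≤ (i : ℕ) then m i else 0

lemma wdeg_add (n sN : ℕ) (a b : Fin n →₀ ℕ) :
    wdeg n sN (a + b) = wdeg n sN a + wdeg n sN b := by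
  unfold wdeg
  rw [← Finset.sum_add_distrib]
  refine Finset.sum_congr rfl fun i _ => ?_
  split <;> simp

lemma wdeg_single (n sN : ℕ) (j : Fin n) :
    wdeg n sN (Finsupp.single j 1) = if sN ≤ (j : ℕ) then 1 else 0 := by
  unfold wdeg
  rw [Finset.sum_eq_single j]
  · simp
  · intro i _ hne
    simp [Finsupp.single_eq_of_ne' (Ne.symm hne)]
  · simp

lemma coeff_pderiv {n : ℕ} (j : Fin n) (m : Fin n →₀ ℕ) (P : MvPolynomial (Fin n) ℝ) :
    coeff m (pderiv j P) = (m j + 1) * coeff (m + Finsupp.single j 1) P := by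
  induction P using MvPolynomial.induction_on' with
  | monomial s a =>
    rw [pderiv_monomial, coeff_monomial, coeff_monomial]
    rcases eq_or_ne (m + Finsupp.single j 1) s with h | h
    · subst h
      rw [if_pos, if_pos rfl]
      · simp [mul_comm]
      · simp
    · rw [if_neg (show s ≠ m + Finsupp.single j 1 from fun hh => h hh.symm), mul_zero]
      by_cases hs : s j = 0
      · split
        · simp [hs]
        · rfl
      · rw [if_neg]
        intro hsm
        apply h
        rw [← hsm, tsub_add_cancel_of_le]
        rw [Finsupp.single_le_iff]
        omega
  | add p q hp hq => simp [hp, hq, mul_add]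



lemma coeff_hvc (n sN : ℕ) (F : MvPolynomial (Fin n) ℝ) (d : ℕ) (m : Fin n →₀ ℕ) :
    coeff m (highVarComponent n sN F d) = if wdeg n sN m = d then coeff m F else 0 := by
  unfold highVarComponent
  rw [coeff_sum]
  simp_rw [coeff_monomial]
  rw [Finset.sum_ite_eq' _ m (fun mexp => F.coeff mexp)]
  simp only [Finset.mem_filter]
  by_cases hm : m ∈ F.support
  · simp [hm, wdeg]
    congr
  · simp only [hm, false_and, if_false]
    rw [MvPolynomial.notMem_support_iff] at hm
    simp [hm]

lemma hvc_zero (n sN d : ℕ) : highVarComponent n sN 0 d = 0 := by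
  unfold highVarComponent; simp

lemma hvc_sum (n sN : ℕ) {ι : Type*} (s : Finset ι) (f : ι → MvPolynomial (Fin n) ℝ) (d : ℕ) :
    highVarComponent n sN (∑ x ∈ s, f x) d = ∑ x ∈ s, highVarComponent n sN (f x) d := by
  ext m
  rw [coeff_hvc, coeff_sum, coeff_sum]
  simp_rw [coeff_hvc]
  by_cases h : wdeg n sN m = d <;> simp [h]

lemma hvc_Cmul (n sN : ℕ) (r : ℝ) (P : MvPolynomial (Fin n) ℝ) (d : ℕ) :
    highVarComponent n sN (C r * P) d = C r * highVarComponent n sN P d := by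
  ext m
  rw [coeff_hvc, coeff_C_mul, coeff_C_mul, coeff_hvc]
  by_cases h : wdeg n sN m = d <;> simp [h]

lemma key_comm (n sN : ℕ) (j k : Fin n) (D D' : ℕ)
    (h : D + (if sN ≤ (k : ℕ) then 1 else 0) = D' + (if sN ≤ (j : ℕ) then 1 else 0))
    (P : MvPolynomial (Fin n) ℝ) :
    highVarComponent n sN (X k * pderiv j P) D'
      = X k * pderiv j (highVarComponent n sN P D) := by
  ext m
  rw [coeff_hvc, coeff_X_mul', coeff_X_mul']
  by_cases hk : k ∈ m.support
  · rw [if_pos hk, if_pos hk, coeff_pderiv, coeff_pderiv, coeff_hvc]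
    have hle : Finsupp.single k 1 ≤ m := by
      rw [Finsupp.single_le_iff]
      simpa [Finsupp.mem_support_iff, Nat.one_le_iff_ne_zero] using hk
    have hm : (m - Finsupp.single k 1) + Finsupp.single k 1 = m := tsub_add_cancel_of_le hle
    have h1 : wdeg n sN ((m - Finsupp.single k 1) + Finsupp.single j 1)
        = wdeg n sN (m - Finsupp.single k 1) + (if sN ≤ (j : ℕ) then 1 else 0) := by
      rw [wdeg_add, wdeg_single]
    have h2 : wdeg n sN m
        = wdeg n sN (m - Finsupp.single k 1) + (if sN ≤ (k : ℕ) then 1 else 0) := by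
      conv_lhs => rw [← hm]
      rw [wdeg_add, wdeg_single]
    have hcond : (wdeg n sN m = D')
        ↔ (wdeg n sN ((m - Finsupp.single k 1) + Finsupp.single j 1) = D) := by
      rw [h1, h2]; omega
    by_cases hc : wdeg n sN m = D'
    · rw [if_pos hc, if_pos (hcond.mp hc)]
    · rw [if_neg hc, if_neg (fun hh => hc (hcond.mpr hh)), mul_zero]
  · rw [if_neg hk, if_neg hk]
    simp


/- STATEMENT 3: Let `s` be an `n`-dimensional real Lie algebra whose structure constants `C`
(over a basis whose first `sN` elements span a subalgebra `s'` and whose remaining elements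
span a complement `m` with `⁅s', m⁆ ⊆ m`), and let `Ĉ` be the structure constants of the
contracted algebra (`Ĉ_{ij}^k = C_{ij}^k` if `i ≤ s` or `j ≤ s`, else `0`).  If `F` is an
invariant of `s` and `F_M` is its nonzero homogeneous component of highest degree `M` in the
variables `x_{s+1},…,x_n`, then `F_M` is an invariant of the contraction. -/
theorem highest_component_invariant_of_contraction
    (n sN : ℕ) (hsn : sN ≤ n) (C : Fin n → Fin n → Fin n → ℝ)
    -- C is the structure tensor of a Lie algebra: antisymmetry and Jacobi identity
    (hanti : ∀ i j k, C i j k = - C j i k)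
    (hjac : ∀ i j k m, ∑ l : Fin n,
      (C i j l * C l k m + C j k l * C l i m + C k i l * C l j m) = 0)
    -- the first sN basis elements span a subalgebra
    (hsub : ∀ i j k : Fin n, (i : ℕ) < sN → (j : ℕ) < sN → sN ≤ (k : ℕ) → C i j k = 0)
    -- the span m of the remaining basis elements satisfies ⁅s', m⁆ ⊆ m
    (hmod : ∀ i j k : Fin n, (i : ℕ) < sN → sN ≤ (j : ℕ) → (k : ℕ) < sN → C i j k = 0)
    (F : MvPolynomial (Fin n) ℝ)
    (hF : IsLieInvariant C F)
    (M : ℕ)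
    (hM : highVarComponent n sN F M ≠ 0)
    (hMmax : ∀ d : ℕ, M < d → highVarComponent n sN F d = 0) :
    IsLieInvariant
      (fun i j k => if (i : ℕ) < sN ∨ (j : ℕ) < sN then C i j k else 0)
      (highVarComponent n sN F M) := by
  intro i
  by_cases hi : (i : ℕ) < sN
  · have key : ∀ j k : Fin n,
        MvPolynomial.C (if (i : ℕ) < sN ∨ (j : ℕ) < sN then C i j k else 0) * X k
          * pderiv j (highVarComponent n sN F M)
        = highVarComponent n sN (MvPolynomial.C (C i j k) * X k * pderiv j F) M := by
      intro j k
      rw [if_pos (Or.inl hi)]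
      by_cases hC : C i j k = 0
      · simp [hC, hvc_zero]
      · have hjk : (if sN ≤ (j : ℕ) then 1 else 0 : ℕ)
            = (if sN ≤ (k : ℕ) then 1 else 0) := by
          by_cases hj : (j : ℕ) < sN
          · have hk : (k : ℕ) < sN := by
              by_contra hk
              exact hC (hsub i j k hi hj (le_of_not_gt hk))
            simp [Nat.not_le.mpr hj, Nat.not_le.mpr hk]
          · have hk : sN ≤ (k : ℕ) := by
              by_contra hk
              exact hC (hmod i j k hi (le_of_not_gt hj) (lt_of_not_ge hk))
            simp [le_of_not_gt hj, hk]
        rw [mul_assoc, mul_assoc, hvc_Cmul, key_comm n sN j k M M (by rw [hjk])]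
    trans (∑ j : Fin n, ∑ k : Fin n,
      highVarComponent n sN (MvPolynomial.C (C i j k) * X k * pderiv j F) M)
    · exact Finset.sum_congr rfl fun j _ => Finset.sum_congr rfl fun k _ => key j k
    · simp_rw [← hvc_sum]
      rw [hF i, hvc_zero]
  · have hi' : sN ≤ (i : ℕ) := le_of_not_gt hi
    have key : ∀ j k : Fin n,
        MvPolynomial.C (if (i : ℕ) < sN ∨ (j : ℕ) < sN then C i j k else 0) * X k
          * pderiv j (highVarComponent n sN F M)
        = highVarComponent n sN (MvPolynomial.C (C i j k) * X k * pderiv j F) (M + 1) := by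
      intro j k
      by_cases hj : (j : ℕ) < sN
      · rw [if_pos (Or.inr hj)]
        by_cases hC : C i j k = 0
        · simp [hC, hvc_zero]
        · have hk : sN ≤ (k : ℕ) := by
            by_contra hk
            apply hC
            rw [hanti i j k, hmod j i k hj hi' (lt_of_not_ge hk), neg_zero]
          rw [mul_assoc, mul_assoc, hvc_Cmul,
            key_comm n sN j k M (M + 1) (by simp [hk, Nat.not_le.mpr hj])]
      · have hj' : sN ≤ (j : ℕ) := le_of_not_gt hj
        rw [if_neg (not_or.mpr ⟨hi, hj⟩), map_zero, zero_mul, zero_mul,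
          mul_assoc, hvc_Cmul]
        by_cases hk : sN ≤ (k : ℕ)
        · rw [key_comm n sN j k (M + 1) (M + 1) (by simp [hk, hj']),
            hMmax (M + 1) (by omega)]
          simp
        · rw [key_comm n sN j k (M + 2) (M + 1) (by simp [hk, hj']),
            hMmax (M + 2) (by omega)]
          simp
    trans (∑ j : Fin n, ∑ k : Fin n,
      highVarComponent n sN (MvPolynomial.C (C i j k) * X k * pderiv j F) (M + 1))
    · exact Finset.sum_congr rfl fun j _ => Finset.sum_congr rfl fun k _ => key j k
    · simp_rw [← hvc_sum]
      rw [hF i, hvc_zero]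
end

section
/- Let s be a finite-dimensional semisimple real Lie algebra with Killing form κ, and s' ⊆ s a Lie subalgebra on which the restriction of κ is nondegenerate; let m be the κ-orthogonal complement of s'. Then: (i) s = s' ⊕ m and ⁅s', m⁆ ⊆ m; (ii) defining the quadratic polynomial function C on s* by C(ξ) := ξ(x_ξ) where x_ξ ∈ s is the unique element with κ(x_ξ, ·) = ξ, and F on s* by F(ξ) := (ξ|_{s'})(y_ξ) where y_ξ ∈ s' is the unique element with κ|_{s'}(y_ξ, ·) = ξ|_{s'}, the difference C' := C − F depends only on ξ|_m, F is an invariant of the coadjoint representation of s' (i.e., its polar bilinear form B_F satisfies B_F(ξ, ξ∘ad_{s'}(a)) = 0 for all a ∈ s', ξ ∈ s'*), and C' is an invariant of the coadjoint representation of the associated contraction g (i.e., its polar form B_{C'} satisfies B_{C'}(ξ, ξ∘ad_g(X)) = 0 for all X ∈ g, ξ ∈ g*). -/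
section Aux

variable {s : Type*} [LieRing s] [LieAlgebra ℝ s] [FiniteDimensional ℝ s]
set_option linter.unusedSectionVars false

private lemma aux_nd_restrict (V : Submodule ℝ s)
    (h : ∀ v ∈ V, (∀ w ∈ V, killingForm ℝ s v w = 0) → v = 0) :
    ((killingForm ℝ s).restrict V).Nondegenerate := by
  refine ⟨fun v hv => ?_, fun v hv => ?_⟩
  · exact Subtype.ext (h v v.2 fun w hw => by simpa using hv ⟨w, hw⟩)
  · exact Subtype.ext (h v v.2 fun w hw =>
      (LieModule.traceForm_comm ℝ s s w v).symm.trans (by simpa using hv ⟨w, hw⟩))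

/-- The `κ`-representer of (the restriction to `V` of) a functional, inside `V`. -/
private noncomputable def repMap (V : Submodule ℝ s)
    (hV : ((killingForm ℝ s).restrict V).Nondegenerate) :
    Module.Dual ℝ s →ₗ[ℝ] s :=
  V.subtype ∘ₗ (((killingForm ℝ s).restrict V).toDual hV).symm.toLinearMap ∘ₗ
    V.subtype.dualMap

private lemma repMap_mem (V : Submodule ℝ s)
    (hV : ((killingForm ℝ s).restrict V).Nondegenerate) (ξ : Module.Dual ℝ s) :
    repMap V hV ξ ∈ V := by
  simp only [repMap, LinearMap.comp_apply, Submodule.subtype_apply]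
  exact Submodule.coe_mem _

private lemma repMap_spec (V : Submodule ℝ s)
    (hV : ((killingForm ℝ s).restrict V).Nondegenerate) (ξ : Module.Dual ℝ s)
    {w : s} (hw : w ∈ V) :
    killingForm ℝ s (repMap V hV ξ) w = ξ w := by
  have := LinearMap.BilinForm.apply_toDual_symm_apply
    (B := (killingForm ℝ s).restrict V) (hB := hV) (f := V.subtype.dualMap ξ) (v := ⟨w, hw⟩)
  simpa [repMap] using this

end Aux

/- STATEMENT 4: Let `s` be a finite-dimensional semisimple real Lie algebra with Killing form
`κ`, `s'` a subalgebra on which `κ` restricts nondegenerately, and `m` the `κ`-orthogonal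
complement of `s'`.  Then:
(i) `s = s' ⊕ m` and `⁅s', m⁆ ⊆ m`;
(ii) with `C(ξ) := ξ(x_ξ)` (where `κ(x_ξ,·) = ξ`) and `F(ξ) := ξ(y_ξ)` (where `y_ξ ∈ s'` and
`κ|_{s'}(y_ξ,·) = ξ|_{s'}`), the difference `C' := C − F` depends only on `ξ|_m`, `F` is an
invariant of the coadjoint representation of `s'` (its polar form `B_F` satisfies
`B_F(ξ, ξ∘ad(a)) = 0` for `a ∈ s'`), and `C'` is an invariant of the coadjoint representation
of the contraction `g` (its polar form satisfies `B_{C'}(ξ, ξ∘ad_g(X)) = 0` for all `X`),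
where `ad_g(X) = ad(p X) + ad(X − p X) ∘ p` with `p` the projection onto `s'` along `m`. -/
theorem killing_quadratic_casimir_contraction
    (s : Type*) [LieRing s] [LieAlgebra ℝ s] [FiniteDimensional ℝ s]
    [LieAlgebra.IsSemisimple ℝ s]
    (s' : LieSubalgebra ℝ s)
    -- the restriction of the Killing form to s' is nondegenerate
    (hnd : ∀ y ∈ s', (∀ z ∈ s', killingForm ℝ s y z = 0) → y = 0)
    (m : Submodule ℝ s)
    -- m is the κ-orthogonal complement of s'
    (hm : ∀ x : s, x ∈ m ↔ ∀ y ∈ s', killingForm ℝ s x y = 0) :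
    -- (i)
    IsCompl s'.toSubmodule m ∧
    (∀ a ∈ s', ∀ u ∈ m, ⁅a, u⁆ ∈ m) ∧
    -- (ii)
    (∃ p : s →ₗ[ℝ] s, (∀ x ∈ s', p x = x) ∧ (∀ u ∈ m, p u = 0) ∧
      ∃ C F : Module.Dual ℝ s → ℝ,
        -- defining property of C
        (∀ (ξ : Module.Dual ℝ s) (x : s), (∀ y, killingForm ℝ s x y = ξ y) → C ξ = ξ x) ∧
        -- defining property of F
        (∀ (ξ : Module.Dual ℝ s), ∀ y ∈ s',
          (∀ z ∈ s', killingForm ℝ s y z = ξ z) → F ξ = ξ y) ∧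
        -- C' = C − F depends only on ξ|_m
        (∀ ξ₁ ξ₂ : Module.Dual ℝ s, (∀ u ∈ m, ξ₁ u = ξ₂ u) →
          C ξ₁ - F ξ₁ = C ξ₂ - F ξ₂) ∧
        -- F is an invariant of the coadjoint representation of s'
        (∀ a ∈ s', ∀ ξ : Module.Dual ℝ s,
          (F (ξ + ξ ∘ₗ (LieAlgebra.ad ℝ s a : s →ₗ[ℝ] s))
            - F ξ - F (ξ ∘ₗ (LieAlgebra.ad ℝ s a : s →ₗ[ℝ] s))) / 2 = 0) ∧
        -- C' is an invariant of the coadjoint representation of the contraction g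
        (∀ (X : s) (ξ : Module.Dual ℝ s),
          ((fun η : Module.Dual ℝ s => C η - F η)
              (ξ + ξ ∘ₗ ((LieAlgebra.ad ℝ s (p X) : s →ₗ[ℝ] s)
                + (LieAlgebra.ad ℝ s (X - p X) : s →ₗ[ℝ] s) ∘ₗ p))
            - (C ξ - F ξ)
            - (fun η : Module.Dual ℝ s => C η - F η)
              (ξ ∘ₗ ((LieAlgebra.ad ℝ s (p X) : s →ₗ[ℝ] s)
                + (LieAlgebra.ad ℝ s (X - p X) : s →ₗ[ℝ] s) ∘ₗ p))) / 2 = 0)) := by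
  classical
  set B : LinearMap.BilinForm ℝ s := killingForm ℝ s with hBdef
  have hsym : ∀ x y : s, B x y = B y x := fun x y => LieModule.traceForm_comm ℝ s s x y
  have hinv : ∀ x y z : s, B ⁅x, y⁆ z = B x ⁅y, z⁆ := fun x y z =>
    LieModule.traceForm_apply_lie_apply ℝ s s x y z
  -- the subalgebra as a submodule
  have hmem' : ∀ x : s, x ∈ s'.toSubmodule ↔ x ∈ s' := fun x => Iff.rfl
  -- nondegeneracy of the restriction to s'
  have hndV : ((killingForm ℝ s).restrict s'.toSubmodule).Nondegenerate :=
    aux_nd_restrict _ (fun v hv h => hnd v hv h)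
  set Y : Module.Dual ℝ s →ₗ[ℝ] s := repMap s'.toSubmodule hndV with hYdef
  have hYmem : ∀ ξ, Y ξ ∈ s' := fun ξ => repMap_mem _ hndV ξ
  have hYspec : ∀ ξ, ∀ z ∈ s', B (Y ξ) z = ξ z := fun ξ z hz => repMap_spec _ hndV ξ hz
  have hYuniq : ∀ (ξ : Module.Dual ℝ s), ∀ y ∈ s', (∀ z ∈ s', B y z = ξ z) → Y ξ = y := by
    intro ξ y hy hspec
    have hsub : Y ξ - y ∈ s' := s'.sub_mem (hYmem ξ) hy
    have : Y ξ - y = 0 := by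
      refine hnd _ hsub fun z hz => ?_
      have : B (Y ξ - y) z = B (Y ξ) z - B y z := by
        simp [map_sub, LinearMap.sub_apply]
      rw [this, hYspec ξ z hz, hspec z hz, sub_self]
    exact sub_eq_zero.mp this
  -- part (i) : IsCompl
  have hdisj : Disjoint s'.toSubmodule m := by
    rw [Submodule.disjoint_def]
    intro x hx hxm
    exact hnd x hx fun z hz => by
      have := (hm x).mp hxm z hz; simpa using this
  have hcodis : Codisjoint s'.toSubmodule m := by
    rw [codisjoint_iff_le_sup]
    intro x _
    refine Submodule.mem_sup.mpr ⟨Y (B x), hYmem _, x - Y (B x), ?_, by abel⟩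
    refine (hm _).mpr fun z hz => ?_
    have : B (x - Y (B x)) z = B x z - B (Y (B x)) z := by
      simp [map_sub, LinearMap.sub_apply]
    rw [this, hYspec (B x) z hz, sub_self]
  have hcompl : IsCompl s'.toSubmodule m := ⟨hdisj, hcodis⟩
  -- part (i) : bracket stability
  have hbrk : ∀ a ∈ s', ∀ u ∈ m, ⁅a, u⁆ ∈ m := by
    intro a ha u hu
    refine (hm _).mpr fun z hz => ?_
    have h1 : ⁅a, u⁆ = -⁅u, a⁆ := by rw [← lie_skew]
    have hthis : B ⁅u, a⁆ z = B u ⁅a, z⁆ := hinv u a z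
    have h2 : B u ⁅a, z⁆ = 0 := (hm u).mp hu _ (s'.lie_mem ha hz)
    have h3 : B ⁅a, u⁆ z = -(B ⁅u, a⁆ z) := by
      rw [h1]; simp only [map_neg, LinearMap.neg_apply]
    rw [h3, hthis, h2, neg_zero]
  -- the projection p
  set prj := s'.toSubmodule.projectionOnto m hcompl with hprj
  set p : s →ₗ[ℝ] s := s'.toSubmodule.subtype ∘ₗ prj with hpdef
  have hp1 : ∀ x ∈ s', p x = x := by
    intro x hx
    have := Submodule.projectionOnto_apply_left hcompl ⟨x, hx⟩
    simp only [hpdef, LinearMap.comp_apply, Submodule.subtype_apply]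
    rw [show x = ((⟨x, hx⟩ : s'.toSubmodule) : s) from rfl, this]
  have hp0 : ∀ u ∈ m, p u = 0 := by
    intro u hu
    simp only [hpdef, LinearMap.comp_apply, Submodule.subtype_apply]
    rw [Submodule.projectionOnto_apply_of_mem_right hcompl hu]
    rfl
  have hpmem : ∀ x : s, p x ∈ s' := fun x => Submodule.coe_mem (prj x)
  have hpm : ∀ x : s, x - p x ∈ m := by
    intro x
    have h0 : p (x - p x) = 0 := by
      rw [map_sub, hp1 (p x) (hpmem x), sub_self]
    have : prj (x - p x) = 0 := by
      have := h0
      simp only [hpdef, LinearMap.comp_apply, Submodule.subtype_apply] at this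
      exact Subtype.ext this
    exact (Submodule.projectionOnto_apply_eq_zero_iff hcompl).mp this
  -- the kernel ideal K and its ideal complement J
  set K : LieIdeal ℝ s := LieIdeal.killingCompl ℝ s ⊤ with hKdef
  have hKmem : ∀ k ∈ K, ∀ x : s, B x k = 0 := by
    intro k hk x
    exact (LieIdeal.mem_killingCompl ℝ s ⊤).mp hk x trivial
  have hKmem' : ∀ k ∈ K, ∀ x : s, B k x = 0 := fun k hk x => by
    rw [hsym]; exact hKmem k hk x
  set J : LieIdeal ℝ s := Kᶜ with hJdef
  have hKJ : IsCompl K J := isCompl_compl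
  -- W := J ∩ m
  set W : Submodule ℝ s := (J : LieSubmodule ℝ s s).toSubmodule ⊓ m with hWdef
  have hWm : ∀ w ∈ W, w ∈ m := fun w hw => hw.2
  have hWJ : ∀ w ∈ W, w ∈ J := fun w hw => hw.1
  -- decomposition of m into K + W
  have hKsubm : ∀ k ∈ K, k ∈ m := fun k hk =>
    (hm k).mpr fun y _ => hKmem' k hk y
  have hmdecomp : ∀ u ∈ m, ∃ k ∈ K, ∃ w, w ∈ W ∧ u = k + w := by
    intro u hu
    have htop : u ∈ K ⊔ J := by rw [hKJ.sup_eq_top]; trivial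
    obtain ⟨k, hk, j, hj, hkj⟩ := (LieSubmodule.mem_sup _ _ _).mp htop
    refine ⟨k, hk, j, ⟨hj, ?_⟩, hkj.symm⟩
    have : j = u - k := by rw [← hkj]; abel
    rw [this]
    exact Submodule.sub_mem m hu (hKsubm k hk)
  -- W is s'-invariant
  have hWinv : ∀ a ∈ s', ∀ w ∈ W, ⁅a, w⁆ ∈ W := by
    intro a ha w hw
    exact ⟨(J : LieSubmodule ℝ s s).lie_mem (hWJ w hw), hbrk a ha w (hWm w hw)⟩
  -- nondegeneracy of B on W
  have hWnd : ∀ w ∈ W, (∀ w' ∈ W, B w w' = 0) → w = 0 := by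
    intro w hw h0
    have hwK : w ∈ K := by
      refine (LieIdeal.mem_killingCompl ℝ s ⊤).mpr fun y _ => ?_
      -- decompose y = z + u with z ∈ s', u ∈ m; then u = k + w'
      have hy : y ∈ s'.toSubmodule ⊔ m := by rw [hcompl.sup_eq_top]; trivial
      obtain ⟨z, hz, u, hu, hzu⟩ := Submodule.mem_sup.mp hy
      obtain ⟨k, hk, w', hw', hdec⟩ := hmdecomp u hu
      have h1 : B z w = 0 := by
        rw [hsym]; exact (hm w).mp (hWm w hw) z hz
      have h2 : B k w = 0 := hKmem' k hk w
      have h3 : B w' w = 0 := by rw [hsym]; exact h0 w' hw'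
      calc B y w = B (z + (k + w')) w := by rw [← hzu, hdec]
        _ = B z w + (B k w + B w' w) := by
            simp [map_add, LinearMap.add_apply]
        _ = 0 := by rw [h1, h2, h3]; ring
    have : w ∈ K ⊓ J := ⟨hwK, hWJ w hw⟩
    rw [hKJ.inf_eq_bot] at this
    exact (LieSubmodule.mem_bot _).mp this
  have hndW : ((killingForm ℝ s).restrict W).Nondegenerate :=
    aux_nd_restrict _ hWnd
  set U : Module.Dual ℝ s →ₗ[ℝ] s := repMap W hndW with hUdef
  have hUmem : ∀ ξ, U ξ ∈ W := fun ξ => repMap_mem _ hndW ξ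
  have hUspec : ∀ ξ, ∀ w ∈ W, B (U ξ) w = ξ w := fun ξ w hw => repMap_spec _ hndW ξ hw
  have hUuniq : ∀ (ξ : Module.Dual ℝ s), ∀ w ∈ W, (∀ w' ∈ W, B w w' = ξ w') → U ξ = w := by
    intro ξ w hw hspec
    have hsub : U ξ - w ∈ W := Submodule.sub_mem W (hUmem ξ) hw
    have : U ξ - w = 0 := by
      refine hWnd _ hsub fun w' hw' => ?_
      have : B (U ξ - w) w' = B (U ξ) w' - B w w' := by
        simp [map_sub, LinearMap.sub_apply]
      rw [this, hUspec ξ w' hw', hspec w' hw', sub_self]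
    exact sub_eq_zero.mp this
  -- the Casimir functions
  set F : Module.Dual ℝ s → ℝ := fun ξ => ξ (Y ξ) with hFdef
  set C : Module.Dual ℝ s → ℝ := fun ξ => ξ (Y ξ) + ξ (U ξ) with hCdef
  refine ⟨hcompl, hbrk, p, hp1, hp0, C, F, ?_, ?_, ?_, ?_, ?_⟩
  · -- defining property of C
    intro ξ x hx
    obtain ⟨k, hk, w, hw, hdec⟩ := hmdecomp (x - p x) (hpm x)
    have hY : Y ξ = p x := by
      refine hYuniq ξ (p x) (hpmem x) fun z hz => ?_
      have h1 : B (x - p x) z = 0 := (hm _).mp (hpm x) z hz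
      have h2 : B (p x) z = B x z - B (x - p x) z := by
        simp [map_sub, LinearMap.sub_apply]
      rw [h2, h1, hx z, sub_zero]
    have hU : U ξ = w := by
      refine hUuniq ξ w hw fun w' hw' => ?_
      have hwm' : w' ∈ m := hWm w' hw'
      have h1 : B (p x) w' = 0 := by
        rw [hsym]; exact (hm w').mp hwm' (p x) (hpmem x)
      have h2 : B k w' = 0 := hKmem' k hk w'
      have hxe : x = p x + (k + w) := by rw [← hdec]; abel
      have h3 : B x w' = B (p x) w' + (B k w' + B w w') := by
        conv_lhs => rw [hxe]
        simp [map_add, LinearMap.add_apply]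
      have := h3
      rw [h1, h2, hx w'] at this
      linarith
    have hxk : ξ k = 0 := by
      rw [← hx k, hsym]; exact hKmem' k hk x
    have hxw : ξ w = ξ x - ξ (p x) - ξ k := by
      have : w = x - p x - k := by rw [hdec]; abel
      rw [this, map_sub, map_sub]
    simp only [hCdef, hY, hU, hxw, hxk]
    ring
  · -- defining property of F
    intro ξ y hy hspec
    have : Y ξ = y := hYuniq ξ y hy hspec
    simp only [hFdef, this]
  · -- C' depends only on ξ|m
    intro ξ₁ ξ₂ hag
    have hU12 : U ξ₁ = U ξ₂ := by
      refine hUuniq ξ₁ (U ξ₂) (hUmem ξ₂) fun w' hw' => ?_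
      rw [hUspec ξ₂ w' hw']
      exact (hag w' (hWm w' hw')).symm
    have h1 : C ξ₁ - F ξ₁ = ξ₁ (U ξ₁) := by simp only [hCdef, hFdef]; ring
    have h2 : C ξ₂ - F ξ₂ = ξ₂ (U ξ₂) := by simp only [hCdef, hFdef]; ring
    rw [h1, h2, hU12]
    exact hag (U ξ₂) (hWm _ (hUmem ξ₂))
  · -- invariance of F
    intro a ha ξ
    set η : Module.Dual ℝ s := ξ ∘ₗ (LieAlgebra.ad ℝ s a : s →ₗ[ℝ] s) with hηdef
    have hηapp : ∀ z : s, η z = ξ ⁅a, z⁆ := by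
      intro z; simp [hηdef, LieAlgebra.ad_apply]
    have hYη : Y η = ⁅Y ξ, a⁆ := by
      refine hYuniq η ⁅Y ξ, a⁆ (s'.lie_mem (hYmem ξ) ha) fun z hz => ?_
      rw [hinv, hYspec ξ _ (s'.lie_mem ha hz), hηapp]
    have hξYη : ξ (Y η) = 0 := by
      rw [hYη, ← hYspec ξ _ (s'.lie_mem (hYmem ξ) ha), ← hinv]
      simp
    have hηYξ : η (Y ξ) = 0 := by
      rw [hηapp, ← hYspec ξ _ (s'.lie_mem ha (hYmem ξ)), hsym, hinv]
      simp
    have hYadd : Y (ξ + η) = Y ξ + Y η := map_add Y ξ η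
    have : F (ξ + η) = F ξ + F η + ξ (Y η) + η (Y ξ) := by
      simp only [hFdef, hYadd, map_add, LinearMap.add_apply]
      ring
    rw [this, hξYη, hηYξ]
    ring
  · -- invariance of C' under the contraction
    intro X ξ
    set D : s →ₗ[ℝ] s := (LieAlgebra.ad ℝ s (p X) : s →ₗ[ℝ] s)
      + (LieAlgebra.ad ℝ s (X - p X) : s →ₗ[ℝ] s) ∘ₗ p with hDdef
    set η : Module.Dual ℝ s := ξ ∘ₗ D with hηdef
    have hηapp : ∀ z : s, η z = ξ (⁅p X, z⁆ + ⁅X - p X, p z⁆) := by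
      intro z
      simp [hηdef, hDdef, LieAlgebra.ad_apply]
    have hηW : ∀ w ∈ W, η w = ξ ⁅p X, w⁆ := by
      intro w hw
      rw [hηapp, hp0 w (hWm w hw)]
      simp
    have hlieW : ⁅p X, U ξ⁆ ∈ W := hWinv (p X) (hpmem X) (U ξ) (hUmem ξ)
    have hηUξ : η (U ξ) = 0 := by
      rw [hηW (U ξ) (hUmem ξ), ← hUspec ξ _ hlieW, hsym, hinv]
      simp
    have hξUη : ξ (U η) = 0 := by
      rw [← hUspec ξ _ (hUmem η), hsym, hUspec η _ (hUmem ξ), hηUξ]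
    have hUadd : U (ξ + η) = U ξ + U η := map_add U ξ η
    have hexp : ∀ μ : Module.Dual ℝ s, C μ - F μ = μ (U μ) := by
      intro μ; simp only [hCdef, hFdef]; ring
    simp only [hexp]
    have : (ξ + η) (U (ξ + η)) = ξ (U ξ) + η (U η) + ξ (U η) + η (U ξ) := by
      simp only [hUadd, map_add, LinearMap.add_apply]
      ring
    rw [this, hξUη, hηUξ]
    ring
end

section
/- In the polynomial ring ℂ[l₁,l₂,l₃,t₁₁,t₂₂,t₁₂,t₁₃,t₂₃] (with the conventions t_{jk} = t_{kj} and t₃₃ := −t₁₁ − t₂₂), define C⁽²⁾ = Σ l_il_i + 2Σ t_{ik}t_{ik}, C⁽³⁾ = Σ l_i t_{ik} l_k − (4/3)Σ t_{ik}t_{kl}t_{li}, C⁽²⁰⁾ = Σ l_il_i, and C₃ = Σ t_{ik}t_{kl}t_{li}, all sums over indices 1..3. Then the Jacobian determinant ∂(C⁽²⁾, C⁽³⁾, C⁽²⁰⁾, C₃)/∂(l₂, l₃, t₁₁, t₁₂) is a nonzero polynomial; in particular the four polynomials are functionally independent. -/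
open MvPolynomial

/-- Dual coordinates `l₁,l₂,l₃` (variables `0,1,2` of `ℂ[l₁,l₂,l₃,t₁₁,t₂₂,t₁₂,t₁₃,t₂₃]`). -/
noncomputable def lv (a : Fin 3) : MvPolynomial (Fin 8) ℂ := X ⟨a.1, by omega⟩

/-- Dual coordinates `t_{jk}` with the conventions `t_{jk} = t_{kj}` and
`t₃₃ = −t₁₁ − t₂₂`; here `t₁₁,t₂₂,t₁₂,t₁₃,t₂₃` are the variables `3,4,5,6,7`. -/
noncomputable def tv (a b : Fin 3) : MvPolynomial (Fin 8) ℂ :=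
  if a = 0 ∧ b = 0 then X 3
  else if a = 1 ∧ b = 1 then X 4
  else if a = 2 ∧ b = 2 then - X 3 - X 4
  else if (a = 0 ∧ b = 1) ∨ (a = 1 ∧ b = 0) then X 5
  else if (a = 0 ∧ b = 2) ∨ (a = 2 ∧ b = 0) then X 6
  else X 7

/-- Quadratic Casimir invariant of `su(3)` in the Elliott basis. -/
noncomputable def Csu3₂ : MvPolynomial (Fin 8) ℂ :=
  (∑ i : Fin 3, lv i * lv i) + 2 * ∑ i : Fin 3, ∑ k : Fin 3, tv i k * tv i k

/-- Cubic Casimir invariant of `su(3)` in the Elliott basis. -/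
noncomputable def Csu3₃ : MvPolynomial (Fin 8) ℂ :=
  (∑ i : Fin 3, ∑ k : Fin 3, lv i * tv i k * lv k)
    - MvPolynomial.C (4 / 3 : ℂ) * ∑ i : Fin 3, ∑ k : Fin 3, ∑ l : Fin 3,
        tv i k * tv k l * tv l i

/-- Casimir invariant of the `so(3)` subalgebra. -/
noncomputable def Cso3 : MvPolynomial (Fin 8) ℂ := ∑ i : Fin 3, lv i * lv i

/-- Cubic invariant of the contraction `so(3) ⋉ ℝ⁵` of `su(3)`. -/
noncomputable def Ccontr₃ : MvPolynomial (Fin 8) ℂ :=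
  ∑ i : Fin 3, ∑ k : Fin 3, ∑ l : Fin 3, tv i k * tv k l * tv l i

/- STATEMENT 11: the Jacobian determinant
`∂(C⁽²⁾, C⁽³⁾, C⁽²⁰⁾, C₃)/∂(l₂, l₃, t₁₁, t₁₂)` is a nonzero polynomial; in particular the
four polynomials are functionally independent. -/
lemma pderiv_two' (i : Fin 8) : pderiv i (2 : MvPolynomial (Fin 8) ℂ) = 0 := by
  rw [← map_ofNat (C : ℂ →+* MvPolynomial (Fin 8) ℂ) 2]; exact pderiv_C

set_option maxHeartbeats 4000000 in
theorem elliott_jacobian_ne_zero :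
    Matrix.det (Matrix.of fun r c : Fin 4 =>
        pderiv ((![1, 2, 3, 5] : Fin 4 → Fin 8) c)
          ((![Csu3₂, Csu3₃, Cso3, Ccontr₃] : Fin 4 → MvPolynomial (Fin 8) ℂ) r)) ≠ 0 := by
  intro h
  have h2 := congrArg (eval (fun i : Fin 8 => (i.1 : ℂ) + 1)) h
  rw [RingHom.map_det, map_zero] at h2
  have hM : (eval (fun i : Fin 8 => (i.1 : ℂ) + 1)).mapMatrix
      (Matrix.of fun r c : Fin 4 =>
        pderiv ((![1, 2, 3, 5] : Fin 4 → Fin 8) c)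
          ((![Csu3₂, Csu3₃, Cso3, Ccontr₃] : Fin 4 → MvPolynomial (Fin 8) ℂ) r)) =
      !![4, 6, 52, 48; 80, -8, 364, -876; 4, 6, 0, 0; 0, 0, -279, 660] := by
    ext r c
    fin_cases r <;> fin_cases c <;>
      · simp (config := { decide := true }) [RingHom.mapMatrix_apply, Matrix.map_apply,
          Matrix.of_apply, Csu3₂, Csu3₃, Cso3, Ccontr₃, lv, tv, Fin.sum_univ_three,
          pderiv_X, pderiv_two', Fin.ext_iff, Pi.single_apply, pderiv_C, -Fin.val_eq_zero_iff]
        try norm_num [show ((3:Fin 8):ℕ) = 3 from rfl, show ((4:Fin 8):ℕ) = 4 from rfl,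
          show ((5:Fin 8):ℕ) = 5 from rfl, show ((6:Fin 8):ℕ) = 6 from rfl,
          show ((7:Fin 8):ℕ) = 7 from rfl]
  rw [hM] at h2
  simp [Matrix.det_succ_row_zero, Fin.sum_univ_succ, Fin.succAbove] at h2
  norm_num at h2
end

section
/- The 10-dimensional real Lie algebra g with basis {L₀, L₁, L₋₁, Q_μ : μ = −3,…,3} and nonzero brackets [L₀,L₁] = L₁, [L₀,L₋₁] = −L₋₁, [L₁,L₋₁] = 2L₀, [L₀,Q_μ] = μQ_μ, [L₁,Q₂] = 6Q₃, [L₁,Q₁] = Q₂, [L₁,Q₀] = 2Q₁, [L₁,Q₋₁] = 6Q₀, [L₁,Q₋₂] = 10Q₋₁, [L₁,Q₋₃] = Q₋₂, [L₋₁,Q₃] = Q₂, [L₋₁,Q₂] = 10Q₁, [L₋₁,Q₁] = 6Q₀, [L₋₁,Q₀] = 2Q₋₁, [L₋₁,Q₋₁] = Q₋₂, [L₋₁,Q₋₂] = 6Q₋₃, and [Q_μ,Q_ν] = 0, satisfies N(g) = 4. -/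
attribute [local instance 100] LieRing.ofAssociativeRing

/- STATEMENT 18: the 10-dimensional real Lie algebra `g` with basis
`{L₀, L₁, L₋₁, Q_μ : μ = −3,…,3}` and nonzero brackets `[L₀,L₁] = L₁`, `[L₀,L₋₁] = −L₋₁`,
`[L₁,L₋₁] = 2L₀`, `[L₀,Q_μ] = μQ_μ`, `[L₁,Q₂] = 6Q₃`, `[L₁,Q₁] = Q₂`, `[L₁,Q₀] = 2Q₁`,
`[L₁,Q₋₁] = 6Q₀`, `[L₁,Q₋₂] = 10Q₋₁`, `[L₁,Q₋₃] = Q₋₂`, `[L₋₁,Q₃] = Q₂`, `[L₋₁,Q₂] = 10Q₁`,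
`[L₋₁,Q₁] = 6Q₀`, `[L₋₁,Q₀] = 2Q₋₁`, `[L₋₁,Q₋₁] = Q₋₂`, `[L₋₁,Q₋₂] = 6Q₋₃`,
`[Q_μ,Q_ν] = 0`, satisfies `N(g) = 4`.
(Basis order: `L₀,L₁,L₋₁` are `B 0, B 1, B 2` and `Q_μ = B (μ+6)`, i.e. `Q μ = Q_{μ−3}`
for `μ = 0,…,6`.) -/
set_option maxHeartbeats 1000000 in
theorem surfon_contraction_invariants_number
    (g : Type*) [LieRing g] [LieAlgebra ℝ g]
    (B : Module.Basis (Fin 10) ℝ g)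
    (Q : Fin 7 → g) (hQ : ∀ m : Fin 7, Q m = B ⟨3 + m.1, by omega⟩)
    (h01 : ⁅B 0, B 1⁆ = B 1)
    (h02 : ⁅B 0, B 2⁆ = -B 2)
    (h12 : ⁅B 1, B 2⁆ = (2 : ℝ) • B 0)
    (h0Q : ∀ m : Fin 7, ⁅B 0, Q m⁆ = ((m.1 : ℝ) - 3) • Q m)
    (h1Q : ∀ m : Fin 6, ⁅B 1, Q ⟨m.1, by omega⟩⁆ =
      ((![1, 10, 6, 2, 1, 6] : Fin 6 → ℝ) m) • Q ⟨m.1 + 1, by omega⟩)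
    (h1Q3 : ⁅B 1, Q ⟨6, by omega⟩⁆ = 0)
    (h2Q : ∀ m : Fin 6, ⁅B 2, Q ⟨m.1 + 1, by omega⟩⁆ =
      ((![6, 1, 2, 6, 10, 1] : Fin 6 → ℝ) m) • Q ⟨m.1, by omega⟩)
    (h2Qm3 : ⁅B 2, Q ⟨0, by omega⟩⁆ = 0)
    (hQQ : ∀ m m' : Fin 7, ⁅Q m, Q m'⁆ = 0) :
    lieInvariantsNumber ℝ g = 4 := by
  classical
  haveI hfin : FiniteDimensional ℝ g := Module.Finite.of_basis B
  have hdim : Module.finrank ℝ g = 10 := by rw [Module.finrank_eq_card_basis B]; simp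
  have hTapp : ∀ (ξ : Module.Dual ℝ g) (x y : g),
      ((LinearMap.llcomp ℝ g g ℝ ξ).comp (LieAlgebra.ad ℝ g).toLinearMap) x y = ξ ⁅x, y⁆ :=
    fun _ _ _ => rfl
  have skew : ∀ x y : g, ⁅x, y⁆ = -⁅y, x⁆ := fun x y => by rw [← lie_skew]
  -- the span of the Q's and its dual annihilator
  have hQind : LinearIndependent ℝ Q := by
    have hQf : Q = B ∘ fun m : Fin 7 => (⟨3 + m.1, by omega⟩ : Fin 10) := funext fun m => hQ m
    rw [hQf]
    exact B.linearIndependent.comp _ (fun a b hab => by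
      simpa [Fin.ext_iff] using hab)
  set U : Submodule ℝ g := Submodule.span ℝ (Set.range Q) with hU
  have hUdim : Module.finrank ℝ U = 7 := by
    rw [hU, finrank_span_eq_card hQind]; simp
  have hAnn : Module.finrank ℝ U.dualAnnihilator = 3 := by
    have h1 := Submodule.finrank_quotient_add_finrank U
    have h2 : Module.finrank ℝ U.dualAnnihilator = Module.finrank ℝ (g ⧸ U) :=
      (Subspace.quotEquivAnnihilator U).finrank_eq.symm
    rw [hdim, hUdim] at h1
    omega
  -- upper bound: every ξ has rank at most 6
  have hub : ∀ ξ : Module.Dual ℝ g,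
      Module.finrank ℝ (LinearMap.range
        ((LinearMap.llcomp ℝ g g ℝ ξ).comp (LieAlgebra.ad ℝ g).toLinearMap)) ≤ 6 := by
    intro ξ
    set Tξ := (LinearMap.llcomp ℝ g g ℝ ξ).comp (LieAlgebra.ad ℝ g).toLinearMap with hTξ
    set W1 : Submodule ℝ (Module.Dual ℝ g) :=
      Submodule.span ℝ (Set.range fun j : Fin 3 =>
        Tξ (B (Fin.castLE (by omega) j))) with hW1
    have hrle : LinearMap.range Tξ ≤ W1 ⊔ U.dualAnnihilator := by
      rw [LinearMap.range_eq_map, ← B.span_eq, Submodule.map_span, Submodule.span_le]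
      rintro _ ⟨_, ⟨i, rfl⟩, rfl⟩
      by_cases hi : i.1 < 3
      · exact Submodule.mem_sup_left (Submodule.subset_span
          ⟨⟨i.1, hi⟩, congrArg Tξ (congrArg B (Fin.ext rfl))⟩)
      · apply Submodule.mem_sup_right
        rw [Submodule.mem_dualAnnihilator]
        intro w hw
        have hBi : B i = Q ⟨i.1 - 3, by omega⟩ := by
          rw [hQ]
          exact congrArg B (Fin.ext (by simp; omega))
        have hker : U ≤ LinearMap.ker (Tξ (B i)) := by
          rw [hU, Submodule.span_le]
          rintro _ ⟨m, rfl⟩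
          simp [LinearMap.mem_ker, hTξ, hTapp, hBi, hQQ]
        simpa using hker hw
    have h1 : Module.finrank ℝ W1 ≤ 3 := by
      have := finrank_range_le_card (R := ℝ)
        (fun j : Fin 3 => Tξ (B (Fin.castLE (by omega) j)))
      simpa [Set.finrank, hW1] using this
    have h2 := Submodule.finrank_add_le_finrank_add_finrank W1 U.dualAnnihilator
    have h3 := Submodule.finrank_mono hrle
    exact h3.trans (h2.trans (by rw [hAnn]; omega))
  -- the particular functional attaining rank 6
  set ξ0 : Module.Dual ℝ g := B.coord 5 + B.coord 6 + B.coord 7 with hξ0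
  have hxB : ∀ j : Fin 10, ξ0 (B j) =
      (if j = 5 then (1:ℝ) else 0) + (if j = 6 then (1:ℝ) else 0)
        + (if j = 7 then (1:ℝ) else 0) := by
    intro j
    rw [hξ0]
    simp [Module.Basis.coord_apply, Module.Basis.repr_self, Finsupp.single_apply, eq_comm]
  have x0 : ξ0 (B 0) = 0 := by rw [hxB]; simp
  have x1 : ξ0 (B 1) = 0 := by rw [hxB]; simp
  have x2 : ξ0 (B 2) = 0 := by rw [hxB]; simp
  have y0 : ξ0 (Q ⟨0, by omega⟩) = 0 := by rw [hQ, hxB]; simp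
  have y1 : ξ0 (Q ⟨1, by omega⟩) = 0 := by rw [hQ, hxB]; simp
  have y2 : ξ0 (Q ⟨2, by omega⟩) = 1 := by rw [hQ, hxB]; simp
  have y3 : ξ0 (Q ⟨3, by omega⟩) = 1 := by rw [hQ, hxB]; simp
  have y4 : ξ0 (Q ⟨4, by omega⟩) = 1 := by rw [hQ, hxB]; simp
  have y5 : ξ0 (Q ⟨5, by omega⟩) = 0 := by rw [hQ, hxB]; simp
  have y6 : ξ0 (Q ⟨6, by omega⟩) = 0 := by rw [hQ, hxB]; simp
  -- specialized brackets
  have a01 : ⁅B 0, Q ⟨1, by omega⟩⁆ = -((2 : ℝ) • Q ⟨1, by omega⟩) := by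
    have := h0Q ⟨1, by omega⟩; norm_num at this; exact this
  have a02 : ⁅B 0, Q ⟨2, by omega⟩⁆ = -Q ⟨2, by omega⟩ := by
    have := h0Q ⟨2, by omega⟩; norm_num at this; exact this
  have a05 : ⁅B 0, Q ⟨5, by omega⟩⁆ = (2 : ℝ) • Q ⟨5, by omega⟩ := by
    have := h0Q ⟨5, by omega⟩; norm_num at this; exact this
  have a11 : ⁅B 1, Q ⟨1, by omega⟩⁆ = (10 : ℝ) • Q ⟨2, by omega⟩ := by
    have := h1Q ⟨1, by omega⟩; norm_num at this; exact this
  have a12 : ⁅B 1, Q ⟨2, by omega⟩⁆ = (6 : ℝ) • Q ⟨3, by omega⟩ := by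
    have := h1Q ⟨2, by omega⟩; norm_num at this; exact this
  have a15 : ⁅B 1, Q ⟨5, by omega⟩⁆ = (6 : ℝ) • Q ⟨6, by omega⟩ := by
    have := h1Q ⟨5, by omega⟩; norm_num at this; exact this
  have a21 : ⁅B 2, Q ⟨1, by omega⟩⁆ = (6 : ℝ) • Q ⟨0, by omega⟩ := by
    have := h2Q ⟨0, by omega⟩; norm_num at this; exact this
  have a22 : ⁅B 2, Q ⟨2, by omega⟩⁆ = Q ⟨1, by omega⟩ := by
    have := h2Q ⟨1, by omega⟩; norm_num at this; exact this
  have a25 : ⁅B 2, Q ⟨5, by omega⟩⁆ = (10 : ℝ) • Q ⟨4, by omega⟩ := by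
    have := h2Q ⟨4, by omega⟩; norm_num at this; exact this
  have b10 : ⁅B 1, B 0⁆ = -B 1 := by rw [skew, h01]
  have b20 : ⁅B 2, B 0⁆ = B 2 := by rw [skew, h02, neg_neg]
  have b21 : ⁅B 2, B 1⁆ = -((2 : ℝ) • B 0) := by rw [skew, h12]
  have d10 : ⁅Q ⟨1, by omega⟩, B 0⁆ = (2 : ℝ) • Q ⟨1, by omega⟩ := by rw [skew, a01, neg_neg]
  have d11 : ⁅Q ⟨1, by omega⟩, B 1⁆ = -((10 : ℝ) • Q ⟨2, by omega⟩) := by rw [skew, a11]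
  have d12 : ⁅Q ⟨1, by omega⟩, B 2⁆ = -((6 : ℝ) • Q ⟨0, by omega⟩) := by rw [skew, a21]
  have d20 : ⁅Q ⟨2, by omega⟩, B 0⁆ = Q ⟨2, by omega⟩ := by rw [skew, a02, neg_neg]
  have d21 : ⁅Q ⟨2, by omega⟩, B 1⁆ = -((6 : ℝ) • Q ⟨3, by omega⟩) := by rw [skew, a12]
  have d22 : ⁅Q ⟨2, by omega⟩, B 2⁆ = -Q ⟨1, by omega⟩ := by rw [skew, a22]
  have d50 : ⁅Q ⟨5, by omega⟩, B 0⁆ = -((2 : ℝ) • Q ⟨5, by omega⟩) := by rw [skew, a05]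
  have d51 : ⁅Q ⟨5, by omega⟩, B 1⁆ = -((6 : ℝ) • Q ⟨6, by omega⟩) := by rw [skew, a15]
  have d52 : ⁅Q ⟨5, by omega⟩, B 2⁆ = -((10 : ℝ) • Q ⟨4, by omega⟩) := by rw [skew, a25]
  -- the six test vectors
  set u : Fin 6 → g :=
    ![B 0, B 1, B 2, Q ⟨1, by omega⟩, Q ⟨2, by omega⟩, Q ⟨5, by omega⟩] with hu
  have hu0 : u 0 = B 0 := rfl
  have hu1 : u 1 = B 1 := rfl
  have hu2 : u 2 = B 2 := rfl
  have hu3 : u 3 = Q ⟨1, by omega⟩ := rfl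
  have hu4 : u 4 = Q ⟨2, by omega⟩ := rfl
  have hu5 : u 5 = Q ⟨5, by omega⟩ := rfl
  have hLI : LinearIndependent ℝ (fun i : Fin 6 =>
      ((LinearMap.llcomp ℝ g g ℝ ξ0).comp (LieAlgebra.ad ℝ g).toLinearMap) (u i)) := by
    rw [Fintype.linearIndependent_iff]
    intro c hc
    have E0 := LinearMap.congr_fun hc (B 0)
    have E1 := LinearMap.congr_fun hc (B 1)
    have E2 := LinearMap.congr_fun hc (B 2)
    have E3 := LinearMap.congr_fun hc (Q ⟨1, by omega⟩)
    have E4 := LinearMap.congr_fun hc (Q ⟨2, by omega⟩)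
    have E5 := LinearMap.congr_fun hc (Q ⟨5, by omega⟩)
    simp only [Fin.sum_univ_six, hu0, hu1, hu2, hu3, hu4, hu5,
      LinearMap.sum_apply, LinearMap.add_apply, LinearMap.smul_apply,
      LinearMap.zero_apply, hTapp]
      at E0 E1 E2 E3 E4 E5
    rw [lie_self, b10, b20, d10, d20, d50] at E0
    rw [h01, lie_self, b21, d11, d21, d51] at E1
    rw [h02, h12, lie_self, d12, d22, d52] at E2
    rw [a01, a11, a21, hQQ, hQQ, hQQ] at E3
    rw [a02, a12, a22, hQQ, hQQ, hQQ] at E4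
    rw [a05, a15, a25, hQQ, hQQ, hQQ] at E5
    simp only [map_neg, map_smul, map_zero, smul_eq_mul,
      x0, x1, x2, y0, y1, y2, y3, y4, y5, y6] at E0 E1 E2 E3 E4 E5
    have hc4 : c 4 = 0 := by linarith
    have hc3 : c 3 = 0 := by linarith
    have hc5 : c 5 = 0 := by linarith
    have hc1 : c 1 = 0 := by linarith
    have hc0 : c 0 = 0 := by linarith
    have hc2 : c 2 = 0 := by linarith
    intro i
    fin_cases i <;> assumption
  have hf6 : Module.finrank ℝ (LinearMap.range
      ((LinearMap.llcomp ℝ g g ℝ ξ0).comp (LieAlgebra.ad ℝ g).toLinearMap)) = 6 := by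
    refine le_antisymm (hub ξ0) ?_
    have hspan : Submodule.span ℝ (Set.range fun i : Fin 6 =>
        ((LinearMap.llcomp ℝ g g ℝ ξ0).comp (LieAlgebra.ad ℝ g).toLinearMap) (u i)) ≤
        LinearMap.range ((LinearMap.llcomp ℝ g g ℝ ξ0).comp (LieAlgebra.ad ℝ g).toLinearMap) := by
      rw [Submodule.span_le]
      rintro _ ⟨i, rfl⟩
      exact ⟨u i, rfl⟩
    have hm := Submodule.finrank_mono hspan
    rwa [finrank_span_eq_card hLI, Fintype.card_fin] at hm
  have hsup : sSup (Set.range fun ξ : Module.Dual ℝ g =>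
      Module.finrank ℝ (LinearMap.range
        ((LinearMap.llcomp ℝ g g ℝ ξ).comp (LieAlgebra.ad ℝ g).toLinearMap))) = 6 := by
    refine le_antisymm (csSup_le ⟨_, ⟨ξ0, rfl⟩⟩ ?_) (le_csSup ⟨6, ?_⟩ ⟨ξ0, hf6⟩)
    · rintro _ ⟨ξ, rfl⟩; exact hub ξ
    · rintro _ ⟨ξ, rfl⟩; exact hub ξ
  unfold lieInvariantsNumber
  rw [hsup, hdim]
end
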